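/- Let n k : ℕ and a, b : Fin n → EReal and r : Fin k → (Fin n → EReal). Define x, y : Fin k → EReal by x i := ⟨r i | a⟩ and y i := ⟨r i | b⟩. Then ⟨a|b⟩ ≤ ⟨x|y⟩. Moreover, if both a and b lie in the convex hull of r₁, ..., r_k (i.e. there exist lam, mu : Fin k → EReal with a j = ⨆ i, lam i + r i j and b j = ⨆ i, mu i + r i j for all j), then ⟨a|b⟩ = ⟨x|y⟩. -/

import Mathlib

/-- The residual bracket `⟨x|y⟩` on `EReal`-vectors. -/
noncomputable def bracket {n : ℕ} (x y : Fin n → EReal) : EReal :=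
  sSup {c : EReal | ∀ i, c + x i ≤ y i}

lemma sSup_add_le {S : Set EReal} {x y : EReal} (h : ∀ c ∈ S, c + x ≤ y) :
    sSup S + x ≤ y := by
  induction x using EReal.rec with
  | bot => simp [EReal.add_bot]
  | coe t =>
      rw [← EReal.le_sub_iff_add_le (Or.inl (by simp)) (Or.inl (by simp))]
      exact sSup_le fun c hc =>
        (EReal.le_sub_iff_add_le (Or.inl (by simp)) (Or.inl (by simp))).mpr (h c hc)
  | top =>
      by_cases hS : ∃ c ∈ S, c ≠ ⊥
      · obtain ⟨c, hc, hcb⟩ := hS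
        have := h c hc
        rw [EReal.add_top_of_ne_bot hcb] at this
        exact le_trans le_top this
      · have : sSup S ≤ ⊥ := sSup_le fun c hc => by
          push_neg at hS; exact (hS c hc).le
        rw [le_bot_iff] at this
        rw [this, EReal.bot_add]
        exact bot_le

/-- The sup defining the bracket is attained. -/
lemma bracket_mem {n : ℕ} (x y : Fin n → EReal) (i : Fin n) :
    bracket x y + x i ≤ y i :=
  sSup_add_le fun c hc => hc i

lemma le_bracket {n : ℕ} {x y : Fin n → EReal} {c : EReal}
    (h : ∀ i, c + x i ≤ y i) : c ≤ bracket x y :=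
  le_sSup h

/-- Change of coordinates: `⟨a|b⟩ ≤ ⟨x|y⟩` where `x i = ⟨r i|a⟩` and
`y i = ⟨r i|b⟩`, with equality when `a` and `b` lie in the convex hull of
`r 1, ..., r k`. -/
theorem stmt_17 (n k : ℕ) (a b : Fin n → EReal) (r : Fin k → (Fin n → EReal))
    (x y : Fin k → EReal)
    (hx : x = fun i => bracket (r i) a) (hy : y = fun i => bracket (r i) b) :
    bracket a b ≤ bracket x y ∧
    ((∃ lam : Fin k → EReal, ∀ j, a j = ⨆ i, lam i + r i j) →
     (∃ mu : Fin k → EReal, ∀ j, b j = ⨆ i, mu i + r i j) →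
     bracket a b = bracket x y) := by
  subst hx hy
  have h1 : bracket a b ≤ bracket (fun i => bracket (r i) a) (fun i => bracket (r i) b) := by
    apply le_bracket
    intro i
    apply le_bracket
    intro j
    calc bracket a b + bracket (r i) a + r i j
        = bracket a b + (bracket (r i) a + r i j) := by rw [add_assoc]
      _ ≤ bracket a b + a j := add_le_add_right (bracket_mem (r i) a j) _
      _ ≤ b j := bracket_mem a b j
  refine ⟨h1, ?_⟩
  rintro ⟨lam, hlam⟩ -
  refine le_antisymm h1 ?_
  apply le_bracket
  intro j
  set c := bracket (fun i => bracket (r i) a) (fun i => bracket (r i) b)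
  rw [hlam j, iSup, add_comm]
  apply sSup_add_le
  rintro t ⟨i, rfl⟩
  calc lam i + r i j + c = c + lam i + r i j := by
        rw [add_comm (lam i + r i j) c, ← add_assoc]
    _ ≤ c + bracket (r i) a + r i j := by
        apply add_le_add_left
        apply add_le_add_right
        apply le_bracket
        intro m
        rw [hlam m]
        exact le_iSup (fun i => lam i + r i m) i
    _ ≤ bracket (r i) b + r i j := add_le_add_left (bracket_mem _ _ i) _
    _ ≤ b j := bracket_mem (r i) b j
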